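/- If Δ is a 2-local derivation on 𝓑 with Δ(L_{0,0}) = Δ(L_{1,0}) = 0, then Δ(L_{n,0}) = 0 for all n ∈ ℤ. -/

import Mathlib

/-!
Write `Δ (L n 0)` both as `D (L n 0)` with `D = ad a + λ d` killing `L 0 0` and as `D' (L n 0)`
with `D' = ad b + μ d` killing `L 1 0`. The first condition forces `a` to live on the line
`α + i = 0`, so `D (L n 0)` has components `L β i` only with `β ≤ n`. The second forces `b` to live
on the line `α = 1` apart from `b (0, 0) = μ`, and the `L n 0`-terms coming from `b (0, 0)` and
from `μ d` cancel, so `D' (L n 0)` has components only with `β = n + 1`. Hence `Δ (L n 0) = 0`.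
-/

noncomputable section

abbrev B := (ℤ × ℕ) →₀ ℂ

/-- basis element `L α i` -/
def L (α : ℤ) (i : ℕ) : B := Finsupp.single (α, i) 1

/-- structure constant `(α-1)(j+1) - (β-1)(i+1)` -/
def coef (p q : ℤ × ℕ) : ℂ :=
  ((p.1 - 1) * ((q.2 : ℤ) + 1) - (q.1 - 1) * ((p.2 : ℤ) + 1) : ℤ)

/-- the Block-type bracket, as a bilinear map -/
def br : B →ₗ[ℂ] B →ₗ[ℂ] B :=
  Finsupp.lsum ℂ fun p => LinearMap.toSpanSingleton ℂ _
    (Finsupp.lsum ℂ fun q => LinearMap.toSpanSingleton ℂ _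
      (coef p q • L (p.1 + q.1) (p.2 + q.2)))

/-- the outer derivation `d`, with `d (L β j) = β • L β j` -/
def dmap : B →ₗ[ℂ] B :=
  Finsupp.lsum ℂ fun p => LinearMap.toSpanSingleton ℂ _ ((p.1 : ℂ) • L p.1 p.2)

def IsDer (D : B →ₗ[ℂ] B) : Prop := ∀ x y, D (br x y) = br (D x) y + br x (D y)

def Is2Local (Δ : B → B) : Prop :=
  ∀ x y, ∃ D : B →ₗ[ℂ] B, IsDer D ∧ Δ x = D x ∧ Δ y = D y

def derivationOf (a : B) (lam : ℂ) : B →ₗ[ℂ] B := br a + lam • dmap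

lemma derivationOf_apply (a : B) (lam : ℂ) (x : B) :
    derivationOf a lam x = br a x + lam • dmap x := rfl

lemma L_apply_eq_ite (α : ℤ) (i : ℕ) (r : ℤ × ℕ) : L α i r = if (α, i) = r then 1 else 0 :=
  Finsupp.single_apply

lemma br_single_single (p q : ℤ × ℕ) (c e : ℂ) :
    br (Finsupp.single p c) (Finsupp.single q e) =
      (c * e * coef p q) • L (p.1 + q.1) (p.2 + q.2) := by
  simp [br, LinearMap.toSpanSingleton_apply, smul_smul, mul_assoc]

lemma br_L_apply_add (x : B) (m : ℤ) (j : ℕ) (α : ℤ) (i : ℕ) :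
    br x (L m j) (α + m, i + j) = x (α, i) * coef (α, i) (m, j) := by
  induction x using Finsupp.induction_linear with
  | zero => simp
  | add f g hf hg => simp [hf, hg, add_mul]
  | single p c =>
    rw [L, br_single_single, Finsupp.smul_apply, L_apply_eq_ite, Finsupp.single_apply]
    by_cases hp : p = (α, i)
    · simp [hp]
    · have hp' : (p.1 + m, p.2 + j) ≠ (α + m, i + j) := by
        contrapose! hp
        simp only [Prod.mk.injEq] at hp
        exact Prod.ext (by omega) (by omega)
      simp [hp, hp']

lemma dmap_apply (x : B) (r : ℤ × ℕ) : dmap x r = (r.1 : ℂ) * x r := by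
  induction x using Finsupp.induction_linear with
  | zero => simp
  | add f g hf hg => simp [hf, hg, mul_add]
  | single p c =>
    simp only [dmap, Finsupp.lsum_single, LinearMap.toSpanSingleton_apply, L,
      Finsupp.smul_single, smul_eq_mul, mul_one, Finsupp.single_apply]
    split_ifs with h
    · subst h; ring
    · ring

lemma derivationOf_L_apply_add (a : B) (lam : ℂ) (m α : ℤ) (i : ℕ) :
    derivationOf a lam (L m 0) (α + m, i) =
      a (α, i) * coef (α, i) (m, 0) + if (α, i) = (0, 0) then lam * m else 0 := by
  rw [derivationOf_apply, Finsupp.add_apply, Finsupp.smul_apply, dmap_apply, L_apply_eq_ite,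
    ← br_L_apply_add]
  by_cases h : (α, i) = (0, 0)
  · simp_all
  · have h' : (m, 0) ≠ (α + m, i) := by
      contrapose! h
      simp only [Prod.mk.injEq] at h
      exact Prod.ext (by omega) (by omega)
    simp [h, h']

lemma apply_eq_zero_of_derivationOf_L00_eq_zero {a : B} {lam : ℂ}
    (h : derivationOf a lam (L 0 0) = 0) {α : ℤ} {i : ℕ} (hαi : α + i ≠ 0) : a (α, i) = 0 := by
  have h0 : (α, i) ≠ (0, 0) := by rintro ⟨⟩; simp at hαi
  have hcoef : coef (α, i) (0, 0) = ((α + i : ℤ) : ℂ) := by simp only [coef]; push_cast; ring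
  have := derivationOf_L_apply_add a lam 0 α i
  rw [h, if_neg h0, hcoef, add_zero, add_zero, Finsupp.zero_apply] at this
  exact (mul_eq_zero.mp this.symm).resolve_right (Int.cast_ne_zero.mpr hαi)

lemma apply_eq_zero_of_derivationOf_L10_eq_zero {b : B} {mu : ℂ}
    (h : derivationOf b mu (L 1 0) = 0) {α : ℤ} {i : ℕ} (h0 : (α, i) ≠ (0, 0)) (h1 : α ≠ 1) :
    b (α, i) = 0 := by
  have hcoef : coef (α, i) (1, 0) = ((α - 1 : ℤ) : ℂ) := by simp only [coef]; push_cast; ring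
  have := derivationOf_L_apply_add b mu 1 α i
  rw [h, if_neg h0, hcoef, add_zero, Finsupp.zero_apply] at this
  exact (mul_eq_zero.mp this.symm).resolve_right (Int.cast_ne_zero.mpr (sub_ne_zero.mpr h1))

lemma eq_apply_of_derivationOf_L10_eq_zero {b : B} {mu : ℂ}
    (h : derivationOf b mu (L 1 0) = 0) : mu = b (0, 0) := by
  have := derivationOf_L_apply_add b mu 1 0 0
  rw [h, if_pos rfl] at this
  simp only [Finsupp.coe_zero, Pi.zero_apply, coef] at this
  push_cast at this
  linear_combination -this

lemma derivationOf_L_apply_eq_zero_of_pos {a : B} {lam : ℂ}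
    (h : derivationOf a lam (L 0 0) = 0) (n : ℤ) {α : ℤ} (hα : 0 < α) (i : ℕ) :
    derivationOf a lam (L n 0) (α + n, i) = 0 := by
  have hα0 : (α, i) ≠ (0, 0) := by simp [hα.ne']
  rw [derivationOf_L_apply_add, apply_eq_zero_of_derivationOf_L00_eq_zero h (by omega),
    if_neg hα0]
  simp

lemma derivationOf_L_apply_eq_zero_of_nonpos {b : B} {mu : ℂ}
    (h : derivationOf b mu (L 1 0) = 0) (n : ℤ) {α : ℤ} (hα : α ≤ 0) (i : ℕ) :
    derivationOf b mu (L n 0) (α + n, i) = 0 := by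
  rw [derivationOf_L_apply_add]
  by_cases h0 : (α, i) = (0, 0)
  · rw [h0, if_pos rfl, eq_apply_of_derivationOf_L10_eq_zero h]
    simp only [coef]
    push_cast
    ring
  · rw [apply_eq_zero_of_derivationOf_L10_eq_zero h h0 (by omega), if_neg h0]
    simp

theorem two_local_vanishes_on_Ln0 (Δ : B → B) (hΔ : Is2Local Δ)
    (hDer : ∀ D : B →ₗ[ℂ] B, IsDer D →
      ∃ (a : B) (lam : ℂ), ∀ x : B, D x = br a x + lam • dmap x)
    (h0 : Δ (L 0 0) = 0) (h1 : Δ (L 1 0) = 0) :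
    ∀ n : ℤ, Δ (L n 0) = 0 := by
  have hForm : ∀ D, IsDer D → ∃ a lam, D = derivationOf a lam := fun D hD => by
    obtain ⟨a, lam, ha⟩ := hDer D hD
    exact ⟨a, lam, LinearMap.ext ha⟩
  intro n
  obtain ⟨D, hD, hD0, hDn⟩ := hΔ (L 0 0) (L n 0)
  obtain ⟨a, lam, rfl⟩ := hForm D hD
  obtain ⟨D', hD', hD'1, hD'n⟩ := hΔ (L 1 0) (L n 0)
  obtain ⟨b, mu, rfl⟩ := hForm D' hD'
  ext ⟨β, i⟩
  obtain ⟨α, rfl⟩ : ∃ α, β = α + n := ⟨β - n, by ring⟩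
  rcases lt_or_ge 0 α with hα | hα
  · rw [hDn]
    exact derivationOf_L_apply_eq_zero_of_pos (hD0 ▸ h0) n hα i
  · rw [hD'n]
    exact derivationOf_L_apply_eq_zero_of_nonpos (hD'1 ▸ h1) n hα i

end
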